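/- arXiv:1710.11538 — 4 statements merged into one kernel-verified Lean document; each statement's English description precedes it below -/
import Mathlib

section
/- The map (x, v, p_x, p_v) ↦ (X₁, X₂, P₁, P₂) defined by X₁ = (p_x + ω₁²v)/(ω₁√(ω₁²−ω₂²)), P₁ = ω₁(p_v + ω₂²x)/√(ω₁²−ω₂²), X₂ = (p_v + ω₁²x)/√(ω₁²−ω₂²), P₂ = (p_x + ω₂²v)/√(ω₁²−ω₂²) is a canonical transformation: it preserves the Poisson brackets, i.e. {X₁,P₁} = {X₂,P₂} = 1 and {X₁,X₂} = {X₁,P₂} = {P₁,P₂} = {X₂,P₁} = 0, where {f,g} = ∂f/∂x·∂g/∂p_x + ∂f/∂v·∂g/∂p_v − ∂f/∂p_x·∂g/∂x − ∂f/∂p_v·∂g/∂v. -/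
/-- Poisson bracket on phase space `(x, v, p_x, p_v) ∈ ℝ⁴`:
`{f,g} = f_x g_{p_x} + f_v g_{p_v} − f_{p_x} g_x − f_{p_v} g_v`. -/
noncomputable def poissonBracket (f g : ℝ → ℝ → ℝ → ℝ → ℝ) (x v px pv : ℝ) : ℝ :=
    deriv (fun s => f s v px pv) x * deriv (fun s => g x v s pv) px
  + deriv (fun s => f x s px pv) v * deriv (fun s => g x v px s) pv
  - deriv (fun s => f x v s pv) px * deriv (fun s => g s v px pv) x
  - deriv (fun s => f x v px s) pv * deriv (fun s => g x s px pv) v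

lemma dlin1 (a b d t : ℝ) : deriv (fun t : ℝ => (a + b*t)/d) t = b/d := by
  have h : HasDerivAt (fun t : ℝ => (a + b*t)/d) (b*1/d) t :=
    (((hasDerivAt_id t).const_mul b).const_add a).div_const d
  simpa using h.deriv

lemma dlin2 (b d t : ℝ) : deriv (fun t : ℝ => (t + b)/d) t = 1/d := by
  simp [deriv_div_const]

lemma dlin3 (c a b d t : ℝ) : deriv (fun t : ℝ => c*(a + b*t)/d) t = c*b/d := by
  simp only [mul_div_assoc]
  rw [deriv_const_mul_field, dlin1]

lemma dlin4 (c b d t : ℝ) : deriv (fun t : ℝ => c*(t + b)/d) t = c*(1/d) := by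
  simp only [mul_div_assoc]
  rw [deriv_const_mul_field, dlin2]

/-- The linear map `(x,v,p_x,p_v) ↦ (X₁,X₂,P₁,P₂)` of the Pais–Uhlenbeck oscillator
is a canonical transformation: it preserves the canonical Poisson brackets. -/
theorem stmt3
    (ω₁ ω₂ : ℝ) (h12 : ω₂ < ω₁) (h2 : 0 < ω₂)
    (X₁ X₂ P₁ P₂ : ℝ → ℝ → ℝ → ℝ → ℝ)
    (hX₁ : ∀ x v px pv, X₁ x v px pv = (px + ω₁^2 * v) / (ω₁ * Real.sqrt (ω₁^2 - ω₂^2)))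
    (hP₁ : ∀ x v px pv, P₁ x v px pv = ω₁ * (pv + ω₂^2 * x) / Real.sqrt (ω₁^2 - ω₂^2))
    (hX₂ : ∀ x v px pv, X₂ x v px pv = (pv + ω₁^2 * x) / Real.sqrt (ω₁^2 - ω₂^2))
    (hP₂ : ∀ x v px pv, P₂ x v px pv = (px + ω₂^2 * v) / Real.sqrt (ω₁^2 - ω₂^2)) :
    ∀ x v px pv : ℝ,
      poissonBracket X₁ P₁ x v px pv = 1 ∧
      poissonBracket X₂ P₂ x v px pv = 1 ∧
      poissonBracket X₁ X₂ x v px pv = 0 ∧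
      poissonBracket X₁ P₂ x v px pv = 0 ∧
      poissonBracket P₁ P₂ x v px pv = 0 ∧
      poissonBracket X₂ P₁ x v px pv = 0 := by
  intro x v px pv
  have hΔ : (0:ℝ) < ω₁^2 - ω₂^2 := by nlinarith
  set s := Real.sqrt (ω₁^2 - ω₂^2) with hsdef
  have hs2 : s^2 = ω₁^2 - ω₂^2 := Real.sq_sqrt hΔ.le
  have hs0 : s ≠ 0 := (Real.sqrt_pos.mpr hΔ).ne'
  have hω0 : ω₁ ≠ 0 := (h2.trans h12).ne'
  have comm : ∀ a b : ℝ, (fun t => (a + b*t)/s) = (fun t => (b*t + a)/s) := by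
    intro a b; funext t; ring_nf
  simp only [poissonBracket, hX₁, hP₁, hX₂, hP₂]
  simp only [dlin1, dlin2, dlin3, dlin4, deriv_const']
  -- remaining: derivatives of forms like (t + b)/d handled; rest constants
  refine ⟨?_, ?_, ?_, ?_, ?_, ?_⟩ <;> field_simp <;> nlinarith [hs2, sq_nonneg s]
end

section
/- The differential operator l̂ = (v/(2ω))·p̂_x − (ω/2)x·p̂_v + (1/(4ω))(p̂_v² − p̂_x²/ω²) + (3ω/4)(v² − ω²x²), with p̂_x = −i∂/∂x and p̂_v = −i∂/∂v, commutes with the degenerate Pais–Uhlenbeck Hamiltonian Ĥ = v·p̂_x + p̂_v²/2 + ω²v² − ω⁴x²/2 when acting on smooth functions of (x, v). -/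
open Complex

/-- The momentum operator `p̂_x = −i ∂/∂x` acting on functions `Ψ(x, v)`. -/
noncomputable def opPx (Ψ : ℝ → ℝ → ℂ) : ℝ → ℝ → ℂ :=
  fun x v => -I * deriv (fun s => Ψ s v) x

/-- The momentum operator `p̂_v = −i ∂/∂v` acting on functions `Ψ(x, v)`. -/
noncomputable def opPv (Ψ : ℝ → ℝ → ℂ) : ℝ → ℝ → ℂ :=
  fun x v => -I * deriv (fun s => Ψ x s) v

/-- The degenerate Pais–Uhlenbeck Hamiltonian `Ĥ = v p̂_x + p̂_v²/2 + ω²v² − ω⁴x²/2`. -/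
noncomputable def opH (ω : ℝ) (Ψ : ℝ → ℝ → ℂ) : ℝ → ℝ → ℂ :=
  fun x v => (v : ℂ) * opPx Ψ x v + (1/2 : ℂ) * opPv (opPv Ψ) x v
    + ((ω^2 * v^2 - ω^4 * x^2 / 2 : ℝ) : ℂ) * Ψ x v

/-- The operator `l̂ = (v/2ω)p̂_x − (ω/2)x p̂_v + (1/4ω)(p̂_v² − p̂_x²/ω²) + (3ω/4)(v² − ω²x²)`. -/
noncomputable def opL (ω : ℝ) (Ψ : ℝ → ℝ → ℂ) : ℝ → ℝ → ℂ :=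
  fun x v => ((v / (2*ω) : ℝ) : ℂ) * opPx Ψ x v - ((ω / 2 * x : ℝ) : ℂ) * opPv Ψ x v
    + ((1 / (4*ω) : ℝ) : ℂ) * (opPv (opPv Ψ) x v - opPx (opPx Ψ) x v / ((ω^2 : ℝ) : ℂ))
    + ((3*ω/4 * (v^2 - ω^2 * x^2) : ℝ) : ℂ) * Ψ x v

noncomputable def cd1 (F : ℝ → ℝ → ℂ) : ℝ → ℝ → ℂ := fun x v => deriv (fun s => F s v) x
noncomputable def cd2 (F : ℝ → ℝ → ℂ) : ℝ → ℝ → ℂ := fun x v => deriv (fun s => F x s) v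

def Sm (F : ℝ → ℝ → ℂ) : Prop := ContDiff ℝ (⊤ : ℕ∞) (fun p : ℝ × ℝ => F p.1 p.2)

variable {F Ψ : ℝ → ℝ → ℂ} {ω : ℝ}

lemma hasD1' (hF : Sm F) (x v : ℝ) :
    HasDerivAt (fun s => F s v) (fderiv ℝ (fun p : ℝ × ℝ => F p.1 p.2) (x, v) (1, 0)) x := by
  have h : HasDerivAt (fun s : ℝ => ((s, v) : ℝ × ℝ)) (1, 0) x :=
    (hasDerivAt_id x).prodMk (hasDerivAt_const x v)
  exact ((hF.differentiable (by simp) (x, v)).hasFDerivAt).comp_hasDerivAt x h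

lemma hasD2' (hF : Sm F) (x v : ℝ) :
    HasDerivAt (fun s => F x s) (fderiv ℝ (fun p : ℝ × ℝ => F p.1 p.2) (x, v) (0, 1)) v := by
  have h : HasDerivAt (fun s : ℝ => ((x, s) : ℝ × ℝ)) (0, 1) v :=
    (hasDerivAt_const v x).prodMk (hasDerivAt_id v)
  exact ((hF.differentiable (by simp) (x, v)).hasFDerivAt).comp_hasDerivAt v h

lemma cd1_eq (hF : Sm F) (x v : ℝ) :
    cd1 F x v = fderiv ℝ (fun p : ℝ × ℝ => F p.1 p.2) (x, v) (1, 0) := (hasD1' hF x v).deriv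

lemma cd2_eq (hF : Sm F) (x v : ℝ) :
    cd2 F x v = fderiv ℝ (fun p : ℝ × ℝ => F p.1 p.2) (x, v) (0, 1) := (hasD2' hF x v).deriv

lemma hasD1 (hF : Sm F) (x v : ℝ) : HasDerivAt (fun s => F s v) (cd1 F x v) x := by
  rw [cd1_eq hF]; exact hasD1' hF x v

lemma hasD2 (hF : Sm F) (x v : ℝ) : HasDerivAt (fun s => F x s) (cd2 F x v) v := by
  rw [cd2_eq hF]; exact hasD2' hF x v

lemma Sm.fd (hF : Sm F) (w : ℝ × ℝ) :
    ContDiff ℝ (⊤ : ℕ∞) (fun p : ℝ × ℝ => fderiv ℝ (fun p : ℝ × ℝ => F p.1 p.2) p w) :=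
  (hF.fderiv_right (by simp)).clm_apply contDiff_const

lemma Sm.cd1 (hF : Sm F) : Sm (_root_.cd1 F) := by
  have h : (fun p : ℝ × ℝ => _root_.cd1 F p.1 p.2)
      = fun p : ℝ × ℝ => fderiv ℝ (fun p : ℝ × ℝ => F p.1 p.2) p (1, 0) := by
    funext p; exact cd1_eq hF p.1 p.2
  rw [Sm, h]; exact hF.fd (1, 0)

lemma Sm.cd2 (hF : Sm F) : Sm (_root_.cd2 F) := by
  have h : (fun p : ℝ × ℝ => _root_.cd2 F p.1 p.2)
      = fun p : ℝ × ℝ => fderiv ℝ (fun p : ℝ × ℝ => F p.1 p.2) p (0, 1) := by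
    funext p; exact cd2_eq hF p.1 p.2
  rw [Sm, h]; exact hF.fd (0, 1)

lemma fderiv_apply_const (hF : Sm F) (z u w : ℝ × ℝ) :
    fderiv ℝ (fun p : ℝ × ℝ => fderiv ℝ (fun p : ℝ × ℝ => F p.1 p.2) p w) z u
      = fderiv ℝ (fderiv ℝ (fun p : ℝ × ℝ => F p.1 p.2)) z u w := by
  rw [fderiv_clm_apply ((hF.fderiv_right (m := (⊤ : ℕ∞)) (by simp)).differentiable (by simp) z)
    (differentiableAt_const w)]
  simp

lemma clairaut (hF : Sm F) : cd1 (cd2 F) = cd2 (cd1 F) := by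
  funext x v
  rw [cd1_eq hF.cd2, cd2_eq hF.cd1]
  have h2 : (fun p : ℝ × ℝ => _root_.cd2 F p.1 p.2)
      = fun p : ℝ × ℝ => fderiv ℝ (fun p : ℝ × ℝ => F p.1 p.2) p (0, 1) := by
    funext p; exact cd2_eq hF p.1 p.2
  have h1 : (fun p : ℝ × ℝ => _root_.cd1 F p.1 p.2)
      = fun p : ℝ × ℝ => fderiv ℝ (fun p : ℝ × ℝ => F p.1 p.2) p (1, 0) := by
    funext p; exact cd1_eq hF p.1 p.2
  rw [h1, h2, fderiv_apply_const hF, fderiv_apply_const hF]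
  exact ((hF.contDiffAt).isSymmSndFDerivAt (by simp only [minSmoothness_of_isRCLikeNormedField]; exact WithTop.coe_le_coe.mpr le_top)).eq _ _

lemma hI (z : ℂ) : -I * (-I * z) = -z := by
  rw [show -I * (-I * z) = I ^ 2 * z by ring, Complex.I_sq]; ring

lemma opH_eq (ω : ℝ) (Ψ : ℝ → ℝ → ℂ) : opH ω Ψ = fun (x v : ℝ) =>
    -I * ((v : ℝ) : ℂ) * cd1 Ψ x v - (1/2 : ℂ) * cd2 (cd2 Ψ) x v
      + ((ω^2 * v^2 - ω^4 * x^2 / 2 : ℝ) : ℂ) * Ψ x v := by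
  funext x v
  simp only [opH, opPx, opPv, cd1, cd2, deriv_const_mul_field, hI]
  ring

lemma opL_eq (hω : ω ≠ 0) (Ψ : ℝ → ℝ → ℂ) : opL ω Ψ = fun x v =>
    -I * ((v / (2*ω) : ℝ) : ℂ) * cd1 Ψ x v + I * ((ω / 2 * x : ℝ) : ℂ) * cd2 Ψ x v
      - ((1 / (4*ω) : ℝ) : ℂ) * cd2 (cd2 Ψ) x v
      + ((1 / (4*ω^3) : ℝ) : ℂ) * cd1 (cd1 Ψ) x v
      + ((3*ω/4 * (v^2 - ω^2 * x^2) : ℝ) : ℂ) * Ψ x v := by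
  funext x v
  have hω' : (ω : ℂ) ≠ 0 := by exact_mod_cast hω
  simp only [opL, opPx, opPv, cd1, cd2, deriv_const_mul_field, hI]
  rw [show ((1 / (4*ω^3) : ℝ) : ℂ) = ((1 / (4*ω) : ℝ) : ℂ) / ((ω^2 : ℝ) : ℂ) by
    push_cast; field_simp]
  ring

lemma cd1_Hnf (hΨ : Sm Ψ) : cd1 (fun (x v : ℝ) =>
    -I * ((v : ℝ) : ℂ) * cd1 Ψ x v - (1/2 : ℂ) * cd2 (cd2 Ψ) x v
      + ((ω^2 * v^2 - ω^4 * x^2 / 2 : ℝ) : ℂ) * Ψ x v) = fun (x v : ℝ) =>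
    -I * ((v : ℝ) : ℂ) * cd1 (cd1 Ψ) x v - (1/2 : ℂ) * cd1 (cd2 (cd2 Ψ)) x v
      + (((-(ω^4 * x)) : ℝ) : ℂ) * Ψ x v
      + ((ω^2 * v^2 - ω^4 * x^2 / 2 : ℝ) : ℂ) * cd1 Ψ x v := by
  funext x v
  show deriv (fun s : ℝ =>
    -I * ((v : ℝ) : ℂ) * cd1 Ψ s v - (1/2 : ℂ) * cd2 (cd2 Ψ) s v
      + ((ω^2 * v^2 - ω^4 * s^2 / 2 : ℝ) : ℂ) * Ψ s v) x = _
  refine HasDerivAt.deriv ?_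
  have hg : HasDerivAt (fun s : ℝ => ω^2 * v^2 - ω^4 * s^2 / 2) (-(ω^4 * x)) x := by
    have h := (hasDerivAt_const x (ω^2 * v^2)).sub
      (((hasDerivAt_pow 2 x).const_mul (ω^4)).div_const 2)
    exact h.congr_deriv (by ring)
  have h1 := (hasD1 hΨ.cd1 x v).const_mul (-I * ((v : ℝ) : ℂ))
  have h2 := (hasD1 hΨ.cd2.cd2 x v).const_mul (1/2 : ℂ)
  have h3 := hg.ofReal_comp.mul (hasD1 hΨ x v)
  refine ((h1.sub h2).add h3).congr_deriv ?_
  all_goals (push_cast [id_eq]; try ring)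

lemma cd2_Hnf (hΨ : Sm Ψ) : cd2 (fun (x v : ℝ) =>
    -I * ((v : ℝ) : ℂ) * cd1 Ψ x v - (1/2 : ℂ) * cd2 (cd2 Ψ) x v
      + ((ω^2 * v^2 - ω^4 * x^2 / 2 : ℝ) : ℂ) * Ψ x v) = fun (x v : ℝ) =>
    -I * cd1 Ψ x v + -I * ((v : ℝ) : ℂ) * cd2 (cd1 Ψ) x v
      - (1/2 : ℂ) * cd2 (cd2 (cd2 Ψ)) x v
      + ((2 * ω^2 * v : ℝ) : ℂ) * Ψ x v
      + ((ω^2 * v^2 - ω^4 * x^2 / 2 : ℝ) : ℂ) * cd2 Ψ x v := by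
  funext x v
  show deriv (fun t : ℝ =>
    -I * ((t : ℝ) : ℂ) * cd1 Ψ x t - (1/2 : ℂ) * cd2 (cd2 Ψ) x t
      + ((ω^2 * t^2 - ω^4 * x^2 / 2 : ℝ) : ℂ) * Ψ x t) v = _
  refine HasDerivAt.deriv ?_
  have hg : HasDerivAt (fun t : ℝ => ω^2 * t^2 - ω^4 * x^2 / 2) (2 * ω^2 * v) v := by
    have h := ((hasDerivAt_pow 2 v).const_mul (ω^2)).sub_const (ω^4 * x^2 / 2)
    exact h.congr_deriv (by ring)
  have h1 := ((hasDerivAt_id v).ofReal_comp.const_mul (-I)).mul (hasD2 hΨ.cd1 x v)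
  have h2 := (hasD2 hΨ.cd2.cd2 x v).const_mul (1/2 : ℂ)
  have h3 := hg.ofReal_comp.mul (hasD2 hΨ x v)
  refine ((h1.sub h2).add h3).congr_deriv ?_
  all_goals (push_cast [id_eq]; try ring)

lemma cd1_H1nf (hΨ : Sm Ψ) : cd1 (fun (x v : ℝ) =>
    -I * ((v : ℝ) : ℂ) * cd1 (cd1 Ψ) x v - (1/2 : ℂ) * cd1 (cd2 (cd2 Ψ)) x v
      + (((-(ω^4 * x)) : ℝ) : ℂ) * Ψ x v
      + ((ω^2 * v^2 - ω^4 * x^2 / 2 : ℝ) : ℂ) * cd1 Ψ x v) = fun (x v : ℝ) =>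
    -I * ((v : ℝ) : ℂ) * cd1 (cd1 (cd1 Ψ)) x v - (1/2 : ℂ) * cd1 (cd1 (cd2 (cd2 Ψ))) x v
      + (((-(ω^4 : ℝ)) : ℝ) : ℂ) * Ψ x v + (((-(ω^4 * x)) : ℝ) : ℂ) * cd1 Ψ x v
      + (((-(ω^4 * x)) : ℝ) : ℂ) * cd1 Ψ x v
      + ((ω^2 * v^2 - ω^4 * x^2 / 2 : ℝ) : ℂ) * cd1 (cd1 Ψ) x v := by
  funext x v
  show deriv (fun s : ℝ =>
    -I * ((v : ℝ) : ℂ) * cd1 (cd1 Ψ) s v - (1/2 : ℂ) * cd1 (cd2 (cd2 Ψ)) s v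
      + (((-(ω^4 * s)) : ℝ) : ℂ) * Ψ s v
      + ((ω^2 * v^2 - ω^4 * s^2 / 2 : ℝ) : ℂ) * cd1 Ψ s v) x = _
  refine HasDerivAt.deriv ?_
  have hg : HasDerivAt (fun s : ℝ => -(ω^4 * s)) (-(ω^4 : ℝ)) x := by
    have h := ((hasDerivAt_id x).const_mul (ω^4)).neg
    exact h.congr_deriv (by ring)
  have hg2 : HasDerivAt (fun s : ℝ => ω^2 * v^2 - ω^4 * s^2 / 2) (-(ω^4 * x)) x := by
    have h := (hasDerivAt_const x (ω^2 * v^2)).sub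
      (((hasDerivAt_pow 2 x).const_mul (ω^4)).div_const 2)
    exact h.congr_deriv (by ring)
  have h1 := (hasD1 hΨ.cd1.cd1 x v).const_mul (-I * ((v : ℝ) : ℂ))
  have h2 := (hasD1 (hΨ.cd2.cd2.cd1) x v).const_mul (1/2 : ℂ)
  have h3 := hg.ofReal_comp.mul (hasD1 hΨ x v)
  have h4 := hg2.ofReal_comp.mul (hasD1 hΨ.cd1 x v)
  refine (((h1.sub h2).add h3).add h4).congr_deriv ?_
  all_goals (push_cast [id_eq]; try ring)

lemma cd2_H2nf (hΨ : Sm Ψ) : cd2 (fun (x v : ℝ) =>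
    -I * cd1 Ψ x v + -I * ((v : ℝ) : ℂ) * cd2 (cd1 Ψ) x v
      - (1/2 : ℂ) * cd2 (cd2 (cd2 Ψ)) x v
      + ((2 * ω^2 * v : ℝ) : ℂ) * Ψ x v
      + ((ω^2 * v^2 - ω^4 * x^2 / 2 : ℝ) : ℂ) * cd2 Ψ x v) = fun (x v : ℝ) =>
    -I * cd2 (cd1 Ψ) x v + (-I * cd2 (cd1 Ψ) x v + -I * ((v : ℝ) : ℂ) * cd2 (cd2 (cd1 Ψ)) x v)
      - (1/2 : ℂ) * cd2 (cd2 (cd2 (cd2 Ψ))) x v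
      + ((2 * ω^2 : ℝ) : ℂ) * Ψ x v + ((2 * ω^2 * v : ℝ) : ℂ) * cd2 Ψ x v
      + ((2 * ω^2 * v : ℝ) : ℂ) * cd2 Ψ x v
      + ((ω^2 * v^2 - ω^4 * x^2 / 2 : ℝ) : ℂ) * cd2 (cd2 Ψ) x v := by
  funext x v
  show deriv (fun t : ℝ =>
    -I * cd1 Ψ x t + -I * ((t : ℝ) : ℂ) * cd2 (cd1 Ψ) x t
      - (1/2 : ℂ) * cd2 (cd2 (cd2 Ψ)) x t
      + ((2 * ω^2 * t : ℝ) : ℂ) * Ψ x t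
      + ((ω^2 * t^2 - ω^4 * x^2 / 2 : ℝ) : ℂ) * cd2 Ψ x t) v = _
  refine HasDerivAt.deriv ?_
  have hg : HasDerivAt (fun t : ℝ => 2 * ω^2 * t) (2 * ω^2 : ℝ) v := by
    have h := (hasDerivAt_id v).const_mul (2 * ω^2)
    exact h.congr_deriv (by ring)
  have hg2 : HasDerivAt (fun t : ℝ => ω^2 * t^2 - ω^4 * x^2 / 2) (2 * ω^2 * v) v := by
    have h := ((hasDerivAt_pow 2 v).const_mul (ω^2)).sub_const (ω^4 * x^2 / 2)
    exact h.congr_deriv (by ring)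
  have h1 := (hasD2 hΨ.cd1 x v).const_mul (-I)
  have h2 := ((hasDerivAt_id v).ofReal_comp.const_mul (-I)).mul (hasD2 hΨ.cd1.cd2 x v)
  have h3 := (hasD2 hΨ.cd2.cd2.cd2 x v).const_mul (1/2 : ℂ)
  have h4 := hg.ofReal_comp.mul (hasD2 hΨ x v)
  have h5 := hg2.ofReal_comp.mul (hasD2 hΨ.cd2 x v)
  refine ((((h1.add h2).sub h3).add h4).add h5).congr_deriv ?_
  all_goals (push_cast [id_eq]; try ring)

lemma cd1_Lnf (hΨ : Sm Ψ) : cd1 (fun (x v : ℝ) =>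
    -I * ((v / (2*ω) : ℝ) : ℂ) * cd1 Ψ x v + I * ((ω / 2 * x : ℝ) : ℂ) * cd2 Ψ x v
      - ((1 / (4*ω) : ℝ) : ℂ) * cd2 (cd2 Ψ) x v
      + ((1 / (4*ω^3) : ℝ) : ℂ) * cd1 (cd1 Ψ) x v
      + ((3*ω/4 * (v^2 - ω^2 * x^2) : ℝ) : ℂ) * Ψ x v) = fun (x v : ℝ) =>
    -I * ((v / (2*ω) : ℝ) : ℂ) * cd1 (cd1 Ψ) x v
      + (I * ((ω / 2 : ℝ) : ℂ) * cd2 Ψ x v + I * ((ω / 2 * x : ℝ) : ℂ) * cd1 (cd2 Ψ) x v)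
      - ((1 / (4*ω) : ℝ) : ℂ) * cd1 (cd2 (cd2 Ψ)) x v
      + ((1 / (4*ω^3) : ℝ) : ℂ) * cd1 (cd1 (cd1 Ψ)) x v
      + (((-(3*ω^3/2 * x)) : ℝ) : ℂ) * Ψ x v
      + ((3*ω/4 * (v^2 - ω^2 * x^2) : ℝ) : ℂ) * cd1 Ψ x v := by
  funext x v
  show deriv (fun s : ℝ =>
    -I * ((v / (2*ω) : ℝ) : ℂ) * cd1 Ψ s v + I * ((ω / 2 * s : ℝ) : ℂ) * cd2 Ψ s v
      - ((1 / (4*ω) : ℝ) : ℂ) * cd2 (cd2 Ψ) s v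
      + ((1 / (4*ω^3) : ℝ) : ℂ) * cd1 (cd1 Ψ) s v
      + ((3*ω/4 * (v^2 - ω^2 * s^2) : ℝ) : ℂ) * Ψ s v) x = _
  refine HasDerivAt.deriv ?_
  have hg : HasDerivAt (fun s : ℝ => ω / 2 * s) (ω / 2 : ℝ) x := by
    have h := (hasDerivAt_id x).const_mul (ω / 2)
    exact h.congr_deriv (by ring)
  have hg2 : HasDerivAt (fun s : ℝ => 3*ω/4 * (v^2 - ω^2 * s^2)) (-(3*ω^3/2 * x)) x := by
    have h := (((hasDerivAt_pow 2 x).const_mul (ω^2)).const_sub (v^2)).const_mul (3*ω/4)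
    exact h.congr_deriv (by ring)
  have h1 := (hasD1 hΨ.cd1 x v).const_mul (-I * ((v / (2*ω) : ℝ) : ℂ))
  have h2 := (hg.ofReal_comp.const_mul I).mul (hasD1 hΨ.cd2 x v)
  have h3 := (hasD1 hΨ.cd2.cd2 x v).const_mul (((1 / (4*ω) : ℝ) : ℂ))
  have h4 := (hasD1 hΨ.cd1.cd1 x v).const_mul (((1 / (4*ω^3) : ℝ) : ℂ))
  have h5 := hg2.ofReal_comp.mul (hasD1 hΨ x v)
  refine ((((h1.add h2).sub h3).add h4).add h5).congr_deriv ?_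
  all_goals (push_cast [id_eq]; try ring)

lemma cd2_Lnf (hΨ : Sm Ψ) : cd2 (fun (x v : ℝ) =>
    -I * ((v / (2*ω) : ℝ) : ℂ) * cd1 Ψ x v + I * ((ω / 2 * x : ℝ) : ℂ) * cd2 Ψ x v
      - ((1 / (4*ω) : ℝ) : ℂ) * cd2 (cd2 Ψ) x v
      + ((1 / (4*ω^3) : ℝ) : ℂ) * cd1 (cd1 Ψ) x v
      + ((3*ω/4 * (v^2 - ω^2 * x^2) : ℝ) : ℂ) * Ψ x v) = fun (x v : ℝ) =>
    (-I * ((1 / (2*ω) : ℝ) : ℂ) * cd1 Ψ x v + -I * ((v / (2*ω) : ℝ) : ℂ) * cd2 (cd1 Ψ) x v)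
      + I * ((ω / 2 * x : ℝ) : ℂ) * cd2 (cd2 Ψ) x v
      - ((1 / (4*ω) : ℝ) : ℂ) * cd2 (cd2 (cd2 Ψ)) x v
      + ((1 / (4*ω^3) : ℝ) : ℂ) * cd2 (cd1 (cd1 Ψ)) x v
      + ((3*ω/2 * v : ℝ) : ℂ) * Ψ x v
      + ((3*ω/4 * (v^2 - ω^2 * x^2) : ℝ) : ℂ) * cd2 Ψ x v := by
  funext x v
  show deriv (fun t : ℝ =>
    -I * ((t / (2*ω) : ℝ) : ℂ) * cd1 Ψ x t + I * ((ω / 2 * x : ℝ) : ℂ) * cd2 Ψ x t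
      - ((1 / (4*ω) : ℝ) : ℂ) * cd2 (cd2 Ψ) x t
      + ((1 / (4*ω^3) : ℝ) : ℂ) * cd1 (cd1 Ψ) x t
      + ((3*ω/4 * (t^2 - ω^2 * x^2) : ℝ) : ℂ) * Ψ x t) v = _
  refine HasDerivAt.deriv ?_
  have hg : HasDerivAt (fun t : ℝ => t / (2*ω)) (1 / (2*ω) : ℝ) v := by
    have h := (hasDerivAt_id v).div_const (2*ω)
    exact h.congr_deriv (by ring)
  have hg2 : HasDerivAt (fun t : ℝ => 3*ω/4 * (t^2 - ω^2 * x^2)) (3*ω/2 * v) v := by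
    have h := ((hasDerivAt_pow 2 v).sub_const (ω^2 * x^2)).const_mul (3*ω/4)
    exact h.congr_deriv (by ring)
  have h1 := (hg.ofReal_comp.const_mul (-I)).mul (hasD2 hΨ.cd1 x v)
  have h2 := (hasD2 hΨ.cd2 x v).const_mul (I * ((ω / 2 * x : ℝ) : ℂ))
  have h3 := (hasD2 hΨ.cd2.cd2 x v).const_mul (((1 / (4*ω) : ℝ) : ℂ))
  have h4 := (hasD2 hΨ.cd1.cd1 x v).const_mul (((1 / (4*ω^3) : ℝ) : ℂ))
  have h5 := hg2.ofReal_comp.mul (hasD2 hΨ x v)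
  refine ((((h1.add h2).sub h3).add h4).add h5).congr_deriv ?_
  all_goals (push_cast [id_eq]; try ring)

lemma cd2_L2nf (hΨ : Sm Ψ) : cd2 (fun (x v : ℝ) =>
    (-I * ((1 / (2*ω) : ℝ) : ℂ) * cd1 Ψ x v + -I * ((v / (2*ω) : ℝ) : ℂ) * cd2 (cd1 Ψ) x v)
      + I * ((ω / 2 * x : ℝ) : ℂ) * cd2 (cd2 Ψ) x v
      - ((1 / (4*ω) : ℝ) : ℂ) * cd2 (cd2 (cd2 Ψ)) x v
      + ((1 / (4*ω^3) : ℝ) : ℂ) * cd2 (cd1 (cd1 Ψ)) x v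
      + ((3*ω/2 * v : ℝ) : ℂ) * Ψ x v
      + ((3*ω/4 * (v^2 - ω^2 * x^2) : ℝ) : ℂ) * cd2 Ψ x v) = fun (x v : ℝ) =>
    (-I * ((1 / (2*ω) : ℝ) : ℂ) * cd2 (cd1 Ψ) x v
      + (-I * ((1 / (2*ω) : ℝ) : ℂ) * cd2 (cd1 Ψ) x v
        + -I * ((v / (2*ω) : ℝ) : ℂ) * cd2 (cd2 (cd1 Ψ)) x v))
      + I * ((ω / 2 * x : ℝ) : ℂ) * cd2 (cd2 (cd2 Ψ)) x v
      - ((1 / (4*ω) : ℝ) : ℂ) * cd2 (cd2 (cd2 (cd2 Ψ))) x v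
      + ((1 / (4*ω^3) : ℝ) : ℂ) * cd2 (cd2 (cd1 (cd1 Ψ))) x v
      + (((3*ω/2 : ℝ) : ℝ) : ℂ) * Ψ x v + ((3*ω/2 * v : ℝ) : ℂ) * cd2 Ψ x v
      + ((3*ω/2 * v : ℝ) : ℂ) * cd2 Ψ x v
      + ((3*ω/4 * (v^2 - ω^2 * x^2) : ℝ) : ℂ) * cd2 (cd2 Ψ) x v := by
  funext x v
  show deriv (fun t : ℝ =>
    (-I * ((1 / (2*ω) : ℝ) : ℂ) * cd1 Ψ x t + -I * ((t / (2*ω) : ℝ) : ℂ) * cd2 (cd1 Ψ) x t)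
      + I * ((ω / 2 * x : ℝ) : ℂ) * cd2 (cd2 Ψ) x t
      - ((1 / (4*ω) : ℝ) : ℂ) * cd2 (cd2 (cd2 Ψ)) x t
      + ((1 / (4*ω^3) : ℝ) : ℂ) * cd2 (cd1 (cd1 Ψ)) x t
      + ((3*ω/2 * t : ℝ) : ℂ) * Ψ x t
      + ((3*ω/4 * (t^2 - ω^2 * x^2) : ℝ) : ℂ) * cd2 Ψ x t) v = _
  refine HasDerivAt.deriv ?_
  have hg : HasDerivAt (fun t : ℝ => t / (2*ω)) (1 / (2*ω) : ℝ) v := by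
    have h := (hasDerivAt_id v).div_const (2*ω)
    exact h.congr_deriv (by ring)
  have hg2 : HasDerivAt (fun t : ℝ => 3*ω/2 * t) (3*ω/2 : ℝ) v := by
    have h := (hasDerivAt_id v).const_mul (3*ω/2)
    exact h.congr_deriv (by ring)
  have hg3 : HasDerivAt (fun t : ℝ => 3*ω/4 * (t^2 - ω^2 * x^2)) (3*ω/2 * v) v := by
    have h := ((hasDerivAt_pow 2 v).sub_const (ω^2 * x^2)).const_mul (3*ω/4)
    exact h.congr_deriv (by ring)
  have h1a := (hasD2 hΨ.cd1 x v).const_mul (-I * ((1 / (2*ω) : ℝ) : ℂ))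
  have h1b := (hg.ofReal_comp.const_mul (-I)).mul (hasD2 hΨ.cd1.cd2 x v)
  have h2 := (hasD2 hΨ.cd2.cd2 x v).const_mul (I * ((ω / 2 * x : ℝ) : ℂ))
  have h3 := (hasD2 hΨ.cd2.cd2.cd2 x v).const_mul (((1 / (4*ω) : ℝ) : ℂ))
  have h4 := (hasD2 hΨ.cd1.cd1.cd2 x v).const_mul (((1 / (4*ω^3) : ℝ) : ℂ))
  have h5 := hg2.ofReal_comp.mul (hasD2 hΨ x v)
  have h6 := hg3.ofReal_comp.mul (hasD2 hΨ.cd2 x v)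
  refine ((((((h1a.add h1b).add h2).sub h3).add h4).add h5).add h6).congr_deriv ?_
  all_goals (push_cast [id_eq]; try ring)

set_option maxHeartbeats 2000000 in
/-- The operator `l̂` commutes with the degenerate Pais–Uhlenbeck Hamiltonian `Ĥ`
on smooth functions of `(x, v)`. -/
theorem stmt9 (ω : ℝ) (hω : 0 < ω)
    (Ψ : ℝ → ℝ → ℂ) (hΨ : ContDiff ℝ (⊤ : ℕ∞) (fun p : ℝ × ℝ => Ψ p.1 p.2)) :
    ∀ x v : ℝ, opL ω (opH ω Ψ) x v - opH ω (opL ω Ψ) x v = 0 := by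
  intro x v
  have hS : Sm Ψ := hΨ
  have hω' : ω ≠ 0 := hω.ne'
  have hωC : (ω : ℂ) ≠ 0 := by exact_mod_cast hω'
  simp only [opL_eq hω', opH_eq, cd1_Hnf hS, cd2_Hnf hS, cd1_H1nf hS, cd2_H2nf hS,
    cd1_Lnf hS, cd2_Lnf hS, cd2_L2nf hS]
  simp only [clairaut hS, clairaut hS.cd1, clairaut hS.cd2, clairaut hS.cd1.cd1,
    clairaut hS.cd1.cd2, clairaut hS.cd2.cd1, clairaut hS.cd2.cd2]
  push_cast
  ring_nf
  field_simp [hωC]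
  linear_combination (4*(ω:ℂ)*(v:ℂ)*cd2 Ψ x v - 4*(ω:ℂ)*(x:ℂ)*cd1 Ψ x v) * Complex.I_sq
end

section
/- Every solution D of D̈ + V''(x(t))·D = 0 along a solution x of ẍ + V'(x) = 0 grows at most linearly: if x is a nonconstant periodic solution with period T, then there exist constants C₁, C₂ such that |D(t)| ≤ C₁ + C₂|t| for all t. -/
open Set Function

/-- A continuous periodic function is bounded. -/
lemma periodic_bdd {f : ℝ → ℝ} {T : ℝ} (hT : 0 < T) (hper : Function.Periodic f T)
    (hf : Continuous f) : ∃ M : ℝ, 0 ≤ M ∧ ∀ t, |f t| ≤ M := by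
  obtain ⟨C, hC⟩ := (isCompact_Icc (a := (0:ℝ)) (b := T)).exists_bound_of_continuousOn
    hf.continuousOn
  refine ⟨max C 0, le_max_right _ _, fun t => ?_⟩
  have hn : f t = f (t - ⌊t / T⌋ * T) := (hper.sub_int_mul_eq ⌊t / T⌋).symm
  have hs : t - ⌊t / T⌋ * T ∈ Icc (0:ℝ) T := by
    constructor
    · have h1 := Int.floor_le (t / T)
      have ht' : t / T * T = t := div_mul_cancel₀ t hT.ne'
      nlinarith [mul_le_mul_of_nonneg_right h1 hT.le]
    · have h2 := Int.lt_floor_add_one (t / T)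
      have ht' : t / T * T = t := div_mul_cancel₀ t hT.ne'
      nlinarith [mul_le_mul_of_nonneg_right h2.le hT.le]
  calc |f t| = ‖f (t - ⌊t / T⌋ * T)‖ := by rw [← hn]; rfl
    _ ≤ C := hC _ hs
    _ ≤ max C 0 := le_max_left _ _

/-- Uniqueness for the linear second order ODE `g'' = -q g`:
zero initial data at `t₀` forces `g ≡ 0`. -/
lemma linode_zero (q : ℝ → ℝ) (Q : ℝ) (hq : ∀ t, |q t| ≤ Q)
    (g : ℝ → ℝ) (hg : ∀ t, HasDerivAt g (deriv g t) t)
    (hg' : ∀ t, HasDerivAt (deriv g) (-(q t * g t)) t)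
    (t₀ : ℝ) (h0 : g t₀ = 0) (h0' : deriv g t₀ = 0) : ∀ t, g t = 0 := by
  set v : ℝ → ℝ × ℝ → ℝ × ℝ := fun t p => (p.2, -(q t * p.1)) with hv
  have hQ0 : 0 ≤ max 1 Q := le_trans zero_le_one (le_max_left _ _)
  set K : NNReal := ⟨max 1 Q, hQ0⟩ with hK
  have hlip : ∀ t, LipschitzOnWith K (v t) Set.univ := by
    intro t
    apply LipschitzWith.lipschitzOnWith
    apply LipschitzWith.of_dist_le_mul
    intro p p'
    rw [Prod.dist_eq, Prod.dist_eq]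
    have hcK : (K : ℝ) = max 1 Q := rfl
    rw [hcK]
    have h1 : dist p.2 p'.2 ≤ max 1 Q * max (dist p.1 p'.1) (dist p.2 p'.2) := by
      nlinarith [le_max_right (dist p.1 p'.1) (dist p.2 p'.2), le_max_left (1:ℝ) Q,
        dist_nonneg (x := p.1) (y := p'.1), dist_nonneg (x := p.2) (y := p'.2)]
    have h2 : dist (-(q t * p.1)) (-(q t * p'.1)) ≤
        max 1 Q * max (dist p.1 p'.1) (dist p.2 p'.2) := by
      rw [Real.dist_eq, Real.dist_eq]
      have he : (-(q t * p.1)) - (-(q t * p'.1)) = q t * (p'.1 - p.1) := by ring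
      rw [he, abs_mul, abs_sub_comm p'.1 p.1]
      have hq' := hq t
      have habs : (0:ℝ) ≤ |p.1 - p'.1| := abs_nonneg _
      have hQle : Q ≤ max 1 Q := le_max_right _ _
      have hqabs : |q t| ≤ max 1 Q := le_trans hq' hQle
      have hle : |p.1 - p'.1| ≤ max (|p.1 - p'.1|) (dist p.2 p'.2) :=
        le_max_left _ _
      have hd2 : (0:ℝ) ≤ dist p.2 p'.2 := dist_nonneg
      calc |q t| * |p.1 - p'.1| ≤ max 1 Q * (max (|p.1 - p'.1|) (dist p.2 p'.2)) := by
            exact mul_le_mul hqabs hle habs (le_trans zero_le_one (le_max_left _ _))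
        _ = max 1 Q * (max (dist p.1 p'.1) (dist p.2 p'.2)) := by simp [Real.dist_eq]
    simp only [max_le_iff]
    constructor
    · exact h1
    · exact h2
  intro t
  set a : ℝ := min t t₀ - 1
  set b : ℝ := max t t₀ + 1
  have hta : a < t := by simp only [a]; have := min_le_left t t₀; linarith
  have htb : t < b := by simp only [b]; have := le_max_left t t₀; linarith
  have ht0a : a < t₀ := by simp only [a]; have := min_le_right t t₀; linarith
  have ht0b : t₀ < b := by simp only [b]; have := le_max_right t t₀; linarith
  set f : ℝ → ℝ × ℝ := fun s => (g s, deriv g s) with hf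
  have hfd : ∀ s ∈ Ioo a b, HasDerivAt f (v s (f s)) s ∧ f s ∈ Set.univ := by
    intro s _
    exact ⟨(hg s).prodMk (hg' s), trivial⟩
  have hzd : ∀ s ∈ Ioo a b,
      HasDerivAt (fun _ : ℝ => ((0:ℝ), (0:ℝ))) (v s ((0:ℝ),(0:ℝ))) s ∧
        ((0:ℝ),(0:ℝ)) ∈ Set.univ := by
    intro s _
    refine ⟨?_, trivial⟩
    have : v s ((0:ℝ),(0:ℝ)) = ((0:ℝ),(0:ℝ)) := by simp [hv]
    rw [this]
    exact hasDerivAt_const s _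
  have := ODE_solution_unique_of_mem_Ioo (fun t _ => hlip t) (f := f) (g := fun _ => ((0:ℝ),(0:ℝ)))
    (t₀ := t₀) ⟨ht0a, ht0b⟩ hfd hzd (by simp [hf, h0, h0'])
  have ht : f t = ((0:ℝ),(0:ℝ)) := this ⟨hta, htb⟩
  exact congrArg Prod.fst ht
/-- Along a nonconstant periodic solution `x` of `ẍ + V'(x) = 0` with
`V(x) = ω²x²/2 + lamx⁴/4`, every solution `D` of the linearized (Hill-type) equation
`D̈ + V''(x(t))·D = 0` grows at most linearly: `|D(t)| ≤ C₁ + C₂|t|`. -/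
theorem stmt16
    (ω lam : ℝ) (hlam : 0 < lam)
    (x : ℝ → ℝ) (hx : ContDiff ℝ 2 x)
    (hodex : ∀ t, deriv (deriv x) t + (ω^2 * x t + lam * x t ^ 3) = 0)
    (T : ℝ) (hT : 0 < T) (hper : Function.Periodic x T)
    (hmin : ∀ T' : ℝ, 0 < T' → Function.Periodic x T' → T ≤ T')
    (hnonconst : ∃ t₁ t₂, x t₁ ≠ x t₂)
    (D : ℝ → ℝ) (hD : ContDiff ℝ 2 D)
    (hodeD : ∀ t, deriv (deriv D) t + (ω^2 + 3 * lam * x t ^ 2) * D t = 0) :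
    ∃ C₁ C₂ : ℝ, ∀ t, |D t| ≤ C₁ + C₂ * |t| := by
  clear hmin
  have h2 : (2 : WithTop ℕ∞) = 1 + 1 := by norm_num
  have hxd : Differentiable ℝ x := hx.differentiable (by norm_num)
  have hx' : ContDiff ℝ 1 (deriv x) := by
    rw [h2, contDiff_succ_iff_deriv] at hx; exact hx.2.2
  have hxd' : Differentiable ℝ (deriv x) := hx'.differentiable (by norm_num)
  have hxc' : Continuous (deriv x) := hxd'.continuous
  have hDd : Differentiable ℝ D := hD.differentiable (by norm_num)
  have hD' : ContDiff ℝ 1 (deriv D) := by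
    rw [h2, contDiff_succ_iff_deriv] at hD; exact hD.2.2
  have hDd' : Differentiable ℝ (deriv D) := hD'.differentiable (by norm_num)
  set q : ℝ → ℝ := fun t => ω^2 + 3*lam*x t^2 with hqdef
  -- second derivative of D
  have hD2 : ∀ t, HasDerivAt (deriv D) (-(q t * D t)) t := by
    intro t
    have he : deriv (deriv D) t = -(q t * D t) := by
      have := hodeD t; simp only [hqdef]; linarith
    rw [← he]; exact (hDd' t).hasDerivAt
  -- second and third derivative of x
  have hodex' : deriv (deriv x) = fun t => -(ω^2 * x t + lam * x t^3) :=
    funext fun t => by linarith [hodex t]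
  have hx3 : ∀ t, HasDerivAt (deriv (deriv x)) (-(q t * deriv x t)) t := by
    intro t
    rw [hodex']
    have hxt : HasDerivAt x (deriv x t) t := (hxd t).hasDerivAt
    have h1 := ((hxt.const_mul (ω^2)).add ((hxt.pow 3).const_mul lam)).neg
    refine h1.congr_deriv ?_
    simp only [hqdef]; ring
  -- periodicity of derivatives of x
  have hperx' : Function.Periodic (deriv x) T := by
    intro t
    have hxe : (fun s => x (s + T)) = x := funext fun s => hper s
    calc deriv x (t + T) = deriv (fun s => x (s + T)) t :=
          (deriv_comp_add_const x T t).symm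
      _ = deriv x t := by rw [hxe]
  have hperx'' : ∀ t, deriv (deriv x) (t + T) = deriv (deriv x) t := by
    intro t; rw [hodex']; simp [hper t]
  have hperq : ∀ t, q (t + T) = q t := fun t => by simp only [hqdef, hper t]
  -- D composed with shift
  have hDshift : ∀ t, HasDerivAt (fun s => D (s + T)) (deriv D (t + T)) t :=
    fun t => HasDerivAt.comp_add_const t T ((hDd (t + T)).hasDerivAt)
  -- nonvanishing point of deriv x
  obtain ⟨t₀, ht₀⟩ : ∃ t₀, deriv x t₀ ≠ 0 := by
    by_contra h
    push_neg at h
    obtain ⟨t₁, t₂, hne⟩ := hnonconst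
    exact hne (is_const_of_deriv_eq_zero hxd h t₁ t₂)
  set b : ℝ := (D (t₀ + T) - D t₀) / deriv x t₀ with hbdef
  set g : ℝ → ℝ := fun t => D (t + T) - D t - b * deriv x t with hgdef
  have hg1 : ∀ t, HasDerivAt g
      (deriv D (t + T) - deriv D t - b * deriv (deriv x) t) t :=
    fun t => ((hDshift t).sub ((hDd t).hasDerivAt)).sub
      (((hxd' t).hasDerivAt).const_mul b)
  have hgd : deriv g = fun t => deriv D (t + T) - deriv D t - b * deriv (deriv x) t :=
    funext fun t => (hg1 t).deriv
  have hg0 : ∀ t, HasDerivAt g (deriv g t) t := fun t => by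
    rw [hgd]; exact hg1 t
  have hg2 : ∀ t, HasDerivAt (deriv g) (-(q t * g t)) t := by
    intro t
    rw [hgd]
    have hsh : ∀ s, HasDerivAt (fun u => deriv D (u + T)) (-(q (s + T) * D (s + T))) s :=
      fun s => HasDerivAt.comp_add_const s T (hD2 (s + T))
    have h := ((hsh t).sub (hD2 t)).sub ((hx3 t).const_mul b)
    refine h.congr_deriv ?_
    rw [hperq t]
    simp only [hgdef]; ring
  -- the Wronskian of D and deriv x is constant
  set W2 : ℝ → ℝ := fun t => deriv D t * deriv x t - D t * deriv (deriv x) t with hW2def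
  have hW2' : ∀ t, HasDerivAt W2 0 t := by
    intro t
    have h := ((hD2 t).mul ((hxd' t).hasDerivAt)).sub
      (((hDd t).hasDerivAt).mul (hx3 t))
    refine h.congr_deriv ?_
    ring
  have hW2const : ∀ s u : ℝ, W2 s = W2 u :=
    fun s u => is_const_of_deriv_eq_zero
      (fun r => (hW2' r).differentiableAt) (fun r => (hW2' r).deriv) s u
  -- zero initial data for g at t₀
  have hgt₀ : g t₀ = 0 := by
    simp only [hgdef, hbdef]
    field_simp
    ring
  have hdgt₀ : deriv g t₀ = 0 := by
    have hW : deriv g t₀ * deriv x t₀ - g t₀ * deriv (deriv x) t₀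
        = W2 (t₀ + T) - W2 t₀ := by
      rw [hgd]
      simp only [hgdef, hW2def]
      rw [hperx' t₀, hperx'' t₀]
      ring
    rw [hgt₀, hW2const (t₀ + T) t₀] at hW
    have : deriv g t₀ * deriv x t₀ = 0 := by linarith
    rcases mul_eq_zero.mp this with h | h
    · exact h
    · exact absurd h ht₀
  -- global bound on q
  obtain ⟨Mx, hMx0, hMx⟩ := periodic_bdd hT hper hxd.continuous
  have hq : ∀ t, |q t| ≤ ω^2 + 3*lam*Mx^2 := by
    intro t
    have h1 := hMx t
    rw [abs_of_nonneg (by simp only [hqdef]; positivity)]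
    simp only [hqdef]
    nlinarith [sq_abs (x t), abs_nonneg (x t), mul_le_mul h1 h1 (abs_nonneg (x t)) hMx0]
  -- g vanishes identically
  have hgzero : ∀ t, g t = 0 := linode_zero q _ hq g hg0 hg2 t₀ hgt₀ hdgt₀
  have hkey : ∀ t, D (t + T) = D t + b * deriv x t := by
    intro t
    have := hgzero t
    simp only [hgdef] at this
    linarith
  -- integer iteration
  have hkeyZ : ∀ n : ℤ, ∀ t, D (t + n * T) = D t + n * (b * deriv x t) := by
    intro n
    induction n using Int.induction_on with
    | zero => intro t; simp
    | succ k ih =>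
      intro t
      have h1 : t + ((k : ℤ) + 1 : ℤ) * T = (t + (k : ℤ) * T) + T := by
        push_cast; ring
      rw [h1, hkey, ih t]
      have h2 : deriv x (t + (k : ℤ) * T) = deriv x t := by
        have := (hperx'.int_mul (k : ℤ)) t
        simpa using this
      rw [h2]
      push_cast; ring
    | pred k ih =>
      intro t
      have h1 := hkey (t + (-(k : ℤ) - 1 : ℤ) * T)
      have h2 : (t + (-(k : ℤ) - 1 : ℤ) * T) + T = t + (-(k : ℤ) : ℤ) * T := by
        push_cast; ring
      rw [h2, ih t] at h1
      have h3 : deriv x (t + (-(k : ℤ) - 1 : ℤ) * T) = deriv x t := by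
        have := (hperx'.int_mul ((-(k : ℤ) - 1 : ℤ))) t
        simpa using this
      rw [h3] at h1
      push_cast at h1 ⊢
      linarith
  -- bounds
  obtain ⟨MD, hMD⟩ := (isCompact_Icc (a := (0:ℝ)) (b := T)).exists_bound_of_continuousOn
    hDd.continuous.continuousOn
  obtain ⟨Mv, hMv0, hMv⟩ := periodic_bdd hT hperx' hxc'
  refine ⟨max MD 0 + |b| * Mv, |b| * Mv / T, ?_⟩
  intro t
  set n : ℤ := ⌊t / T⌋ with hn
  set s : ℝ := t - n * T with hs
  have hsIcc : s ∈ Set.Icc (0:ℝ) T := by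
    constructor
    · have h1 := Int.floor_le (t / T)
      have ht' : t / T * T = t := div_mul_cancel₀ t hT.ne'
      simp only [hs, hn]
      nlinarith [mul_le_mul_of_nonneg_right h1 hT.le]
    · have h2 := Int.lt_floor_add_one (t / T)
      have ht' : t / T * T = t := div_mul_cancel₀ t hT.ne'
      simp only [hs, hn]
      nlinarith [mul_le_mul_of_nonneg_right h2.le hT.le]
  have hDt : D t = D s + n * (b * deriv x s) := by
    have := hkeyZ n s
    have hts : s + n * T = t := by simp only [hs]; ring
    rw [hts] at this
    exact this
  have hDs : |D s| ≤ max MD 0 :=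
    le_trans (hMD s hsIcc) (le_max_left _ _)
  have habsn : |(n : ℝ)| ≤ |t| / T + 1 := by
    have h1 : (n : ℝ) ≤ t / T := Int.floor_le _
    have h2 : t / T < (n : ℝ) + 1 := Int.lt_floor_add_one _
    have h3 : t / T ≤ |t| / T := by gcongr; exact le_abs_self t
    have h4 : -(|t| / T) ≤ t / T := by
      rw [← neg_div]
      gcongr
      exact neg_abs_le t
    rw [abs_le]
    constructor <;> linarith
  have hxv : |deriv x s| ≤ Mv := hMv s
  have hbound : |D t| ≤ max MD 0 + |(n:ℝ)| * (|b| * Mv) := by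
    rw [hDt]
    calc |D s + n * (b * deriv x s)| ≤ |D s| + |(n:ℝ) * (b * deriv x s)| := abs_add_le _ _
      _ ≤ max MD 0 + |(n:ℝ)| * (|b| * Mv) := by
          rw [abs_mul, abs_mul]
          have := mul_le_mul_of_nonneg_left hxv (abs_nonneg b)
          have h5 := mul_le_mul_of_nonneg_left this (abs_nonneg ((n:ℝ)))
          exact add_le_add hDs h5
  have hfin : |(n:ℝ)| * (|b| * Mv) ≤ (|t| / T + 1) * (|b| * Mv) :=
    mul_le_mul_of_nonneg_right habsn (by positivity)
  have heq : max MD 0 + (|t| / T + 1) * (|b| * Mv)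
      = (max MD 0 + |b| * Mv) + (|b| * Mv / T) * |t| := by ring
  linarith
end

section
/- The function Ψ₀^{(g)}(x, D) = ∫_{−∞}^{∞} g(P²/2 + V(x))·e^{iPD} dP satisfies ĤΨ₀^{(g)} = 0, where Ĥ = p̂P̂ + D·V'(x) with p̂ = −i∂/∂x, P̂ = −i∂/∂D, i.e. Ĥ = −∂²/∂x∂D + D·V'(x). -/
open Complex MeasureTheory

lemma schwartz_bound (f : SchwartzMap ℝ ℂ) :
    ∃ C : ℝ, 0 ≤ C ∧ ∀ y : ℝ, (1 + |y|) ^ 2 * ‖f y‖ ≤ C := by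
  refine ⟨2 ^ 2 * ((Finset.Iic ((2 : ℕ), (0 : ℕ))).sup
      (fun m => SchwartzMap.seminorm ℝ m.1 m.2) f), ?_, ?_⟩
  · positivity
  · intro y
    have := SchwartzMap.one_add_le_sup_seminorm_apply (𝕜 := ℝ) (m := (2, 0)) (k := 2) (n := 0)
      le_rfl le_rfl f y
    simpa [norm_iteratedFDeriv_zero, Real.norm_eq_abs] using this

lemma abs_key (c P : ℝ) : 1 + P ^ 2 / 2 ≤ (1 + |c|) * (1 + |P ^ 2 / 2 + c|) := by
  have habs : P ^ 2 / 2 ≤ |P ^ 2 / 2 + c| + |c| := by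
    have h := abs_add_le (P ^ 2 / 2 + c) (-c)
    simp only [add_neg_cancel_right, abs_neg] at h
    calc P ^ 2 / 2 = |P ^ 2 / 2| := (_root_.abs_of_nonneg (by positivity)).symm
    _ ≤ _ := h
  nlinarith [abs_nonneg c, abs_nonneg (P ^ 2 / 2 + c),
    mul_nonneg (abs_nonneg c) (abs_nonneg (P ^ 2 / 2 + c))]

lemma comp_bound {f : SchwartzMap ℝ ℂ} {C : ℝ} (hC : ∀ y : ℝ, (1 + |y|) ^ 2 * ‖f y‖ ≤ C)
    (c P : ℝ) : ‖f (P ^ 2 / 2 + c)‖ * (1 + P ^ 2 / 2) ≤ C * (1 + |c|) ^ 2 := by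
  have hy := hC (P ^ 2 / 2 + c)
  have key := abs_key c P
  nlinarith [norm_nonneg (f (P ^ 2 / 2 + c)), abs_nonneg c, abs_nonneg (P ^ 2 / 2 + c),
    mul_nonneg (norm_nonneg (f (P ^ 2 / 2 + c))) (abs_nonneg (P ^ 2 / 2 + c)),
    mul_nonneg (mul_nonneg (norm_nonneg (f (P ^ 2 / 2 + c))) (abs_nonneg (P ^ 2 / 2 + c)))
      (abs_nonneg c),
    mul_nonneg (norm_nonneg (f (P ^ 2 / 2 + c))) (abs_nonneg c)]

lemma comp_bound' {f : SchwartzMap ℝ ℂ} {C : ℝ} (hC : ∀ y : ℝ, (1 + |y|) ^ 2 * ‖f y‖ ≤ C)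
    (c P : ℝ) :
    (|P| * ‖f (P ^ 2 / 2 + c)‖) * (1 + P ^ 2 / 2) ≤ C * (1 + |c|) ^ 2 := by
  set N := ‖f (P ^ 2 / 2 + c)‖ with hN
  have hy := hC (P ^ 2 / 2 + c)
  have key := abs_key c P
  have hP : |P| ≤ 1 + P ^ 2 / 2 := by nlinarith [abs_nonneg P, sq_abs P (α := ℝ)]
  have hNn : 0 ≤ N := norm_nonneg _
  have h2 : (|P| * N) * (1 + P ^ 2 / 2) ≤ N * ((1 + |c|) * (1 + |P ^ 2 / 2 + c|)) ^ 2 := by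
    have : |P| * (1 + P ^ 2 / 2) ≤ ((1 + |c|) * (1 + |P ^ 2 / 2 + c|)) ^ 2 := by
      calc |P| * (1 + P ^ 2 / 2) ≤ (1 + P ^ 2 / 2) * (1 + P ^ 2 / 2) := by
            apply mul_le_mul_of_nonneg_right hP (by positivity)
      _ ≤ ((1 + |c|) * (1 + |P ^ 2 / 2 + c|)) ^ 2 := by
            rw [← sq]; apply pow_le_pow_left₀ (by positivity) key
    calc (|P| * N) * (1 + P ^ 2 / 2) = N * (|P| * (1 + P ^ 2 / 2)) := by ring
    _ ≤ N * ((1 + |c|) * (1 + |P ^ 2 / 2 + c|)) ^ 2 := by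
          apply mul_le_mul_of_nonneg_left this hNn
  refine h2.trans ?_
  have : N * ((1 + |c|) * (1 + |P ^ 2 / 2 + c|)) ^ 2
      = (1 + |c|) ^ 2 * ((1 + |P ^ 2 / 2 + c|) ^ 2 * N) := by ring
  rw [this, mul_comm C ((1 + |c|) ^ 2)]
  apply mul_le_mul_of_nonneg_left hy (by positivity)

lemma le_inv_form {a K t : ℝ} (ht : 0 < t) (h : a * t ≤ K) : a ≤ K * t⁻¹ := by
  rw [← div_eq_mul_inv, le_div_iff₀ ht]; exact h

lemma integrable_majorant (K : ℝ) : Integrable (fun P : ℝ => K * (1 + P ^ 2 / 2)⁻¹) := by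
  apply Integrable.const_mul
  have h2 : Integrable (fun P : ℝ => 2 * (1 + P ^ 2)⁻¹) := integrable_inv_one_add_sq.const_mul 2
  refine h2.mono ?_ ?_
  · exact (Continuous.inv₀ (by fun_prop) (fun P => by positivity)).aestronglyMeasurable
  · filter_upwards with P
    have heq : ((1 + P ^ 2) / 2)⁻¹ = 2 * (1 + P ^ 2)⁻¹ := by
      rw [inv_div]; ring
    rw [Real.norm_eq_abs, Real.norm_eq_abs,
      _root_.abs_of_nonneg (by positivity : (0:ℝ) ≤ (1 + P ^ 2 / 2)⁻¹),
      _root_.abs_of_nonneg (by positivity : (0:ℝ) ≤ 2 * (1 + P ^ 2)⁻¹), ← heq]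
    gcongr
    linarith [sq_nonneg P]

lemma hasDerivAt_cexp_left (P d : ℝ) :
    HasDerivAt (fun q : ℝ => Complex.exp (I * q * d)) (I * d * Complex.exp (I * P * d)) P := by
  have h0 : HasDerivAt (fun q : ℝ => ((q : ℝ) : ℂ)) 1 P := by
    simpa using (hasDerivAt_id P).ofReal_comp
  have h1 := (h0.const_mul I).mul_const (d : ℂ)
  have h2 := h1.cexp
  convert h2 using 1
  ring

lemma hasDerivAt_cexp_right (P d : ℝ) :
    HasDerivAt (fun t : ℝ => Complex.exp (I * P * t)) (I * P * Complex.exp (I * P * d)) d := by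
  have h0 : HasDerivAt (fun t : ℝ => ((t : ℝ) : ℂ)) 1 d := by
    simpa using (hasDerivAt_id d).ofReal_comp
  have h1 := h0.const_mul (I * (P : ℂ))
  have h2 := h1.cexp
  convert h2 using 1
  ring

lemma hasDerivAt_schwartz_comp (f : SchwartzMap ℝ ℂ) (c P : ℝ) :
    HasDerivAt (fun q : ℝ => f (q ^ 2 / 2 + c))
      (P • (SchwartzMap.derivCLM ℝ ℂ f (P ^ 2 / 2 + c))) P := by
  have hu : HasDerivAt (fun q : ℝ => q ^ 2 / 2 + c) P P := by
    have := ((hasDerivAt_pow 2 P).div_const 2).add_const c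
    simpa using this
  have hg : HasDerivAt f (deriv f (P ^ 2 / 2 + c)) (P ^ 2 / 2 + c) :=
    (f.differentiable.differentiableAt).hasDerivAt
  have := hg.scomp P hu
  rw [SchwartzMap.derivCLM_apply]
  exact this

lemma norm_cexp_I_mul (P d : ℝ) : ‖Complex.exp (I * P * d)‖ = 1 := by
  rw [Complex.norm_exp]
  simp

/-- The zero-energy wave functions `Ψ₀^{(g)}(x,D) = ∫ g(P²/2 + V(x)) e^{iPD} dP` of the
Hamiltonian `Ĥ = −∂²/∂x∂D + D·V'(x)` satisfy `ĤΨ₀^{(g)} = 0` for every Schwartz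
function `g` and smooth potential `V`. -/
theorem stmt19
    (V : ℝ → ℝ) (hV : ContDiff ℝ (⊤ : ℕ∞) V)
    (g : SchwartzMap ℝ ℂ)
    (Ψ : ℝ → ℝ → ℂ)
    (hΨ : ∀ x D : ℝ, Ψ x D = ∫ P : ℝ, g (P^2 / 2 + V x) * Complex.exp (I * P * D)) :
    ∀ x D : ℝ,
      -(deriv (fun d => deriv (fun s => Ψ s d) x) D) + (D : ℂ) * (deriv V x : ℝ) * Ψ x D
        = 0 := by
  intro x D
  set g1 : SchwartzMap ℝ ℂ := SchwartzMap.derivCLM ℝ ℂ g with hg1def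
  obtain ⟨C0, hC0n, hC0⟩ := schwartz_bound g
  obtain ⟨C1, hC1n, hC1⟩ := schwartz_bound g1
  -- measurability of the basic integrands
  have meas : ∀ (f : SchwartzMap ℝ ℂ) (b d : ℝ),
      AEStronglyMeasurable (fun P : ℝ => f (P ^ 2 / 2 + b) * Complex.exp (I * P * d)) volume := by
    intro f b d
    apply Continuous.aestronglyMeasurable
    exact (f.continuous.comp (by fun_prop)).mul (Complex.continuous_exp.comp (by fun_prop))
  have hnorm : ∀ (f : SchwartzMap ℝ ℂ) (b d P : ℝ),
      ‖f (P ^ 2 / 2 + b) * Complex.exp (I * P * d)‖ = ‖f (P ^ 2 / 2 + b)‖ := by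
    intro f b d P
    rw [norm_mul, norm_cexp_I_mul, mul_one]
  -- integrability of the basic integrands
  have hint : ∀ (f : SchwartzMap ℝ ℂ) (Cf : ℝ), 0 ≤ Cf →
      (∀ y : ℝ, (1 + |y|) ^ 2 * ‖f y‖ ≤ Cf) → ∀ (b d : ℝ),
      Integrable (fun P : ℝ => f (P ^ 2 / 2 + b) * Complex.exp (I * P * d)) := by
    intro f Cf hCfn hCf b d
    refine (integrable_majorant (Cf * (1 + |b|) ^ 2)).mono (meas f b d) ?_
    filter_upwards with P
    rw [hnorm, Real.norm_eq_abs, _root_.abs_of_nonneg (by positivity)]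
    exact le_inv_form (by positivity) (comp_bound hCf b P)
  -- Step 1: inner derivative in x
  have hVd : Differentiable ℝ V := hV.differentiable (by simp)
  have hV'c : Continuous (deriv V) := hV.continuous_deriv (by simp)
  obtain ⟨M, hMn, hM⟩ : ∃ M : ℝ, 0 ≤ M ∧
      ∀ s ∈ Metric.closedBall x 1, |V s| ≤ M ∧ |deriv V s| ≤ M := by
    obtain ⟨M1, hM1⟩ := (isCompact_closedBall x 1).exists_bound_of_continuousOn
      hV.continuous.continuousOn
    obtain ⟨M2, hM2⟩ := (isCompact_closedBall x 1).exists_bound_of_continuousOn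
      hV'c.continuousOn
    refine ⟨max M1 M2, ?_, fun s hs => ⟨?_, ?_⟩⟩
    · exact le_trans (norm_nonneg (V x)) (le_trans (hM1 x (Metric.mem_closedBall_self one_pos.le))
        (le_max_left _ _))
    · exact le_trans (hM1 s hs) (le_max_left _ _)
    · exact le_trans (hM2 s hs) (le_max_right _ _)
  have step1 : ∀ d : ℝ, HasDerivAt (fun s => Ψ s d)
      (((deriv V x : ℝ) : ℂ) * ∫ P : ℝ, g1 (P ^ 2 / 2 + V x) * Complex.exp (I * P * d)) x := by
    intro d
    have key := hasDerivAt_integral_of_dominated_loc_of_deriv_le (𝕜 := ℝ) (μ := volume)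
      (F := fun s P => g (P ^ 2 / 2 + V s) * Complex.exp (I * P * d))
      (F' := fun s P => (deriv V s) • (g1 (P ^ 2 / 2 + V s) * Complex.exp (I * P * d)))
      (x₀ := x) (s := Metric.ball x 1)
      (bound := fun P => (M * (C1 * (1 + M) ^ 2)) * (1 + P ^ 2 / 2)⁻¹)
      (Metric.ball_mem_nhds x one_pos)
      (Filter.Eventually.of_forall fun s => meas g (V s) d)
      (hint g C0 hC0n hC0 (V x) d)
      ((meas g1 (V x) d).const_smul (deriv V x))
      ?_ (integrable_majorant _) ?_
    · have hfun : (fun s => Ψ s d)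
          = fun s => ∫ P : ℝ, g (P ^ 2 / 2 + V s) * Complex.exp (I * P * d) :=
        funext fun s => hΨ s d
      rw [hfun]
      have h2 := key.2
      rwa [integral_smul, Complex.real_smul] at h2
    · filter_upwards with P
      intro s hs
      have hs' : s ∈ Metric.closedBall x 1 := Metric.ball_subset_closedBall hs
      obtain ⟨hVs, hV's⟩ := hM s hs'
      rw [norm_smul, Real.norm_eq_abs, hnorm]
      have h1 : ‖g1 (P ^ 2 / 2 + V s)‖ ≤ (C1 * (1 + M) ^ 2) * (1 + P ^ 2 / 2)⁻¹ := by
        refine le_trans (le_inv_form (by positivity) (comp_bound hC1 (V s) P)) ?_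
        gcongr
      calc |deriv V s| * ‖g1 (P ^ 2 / 2 + V s)‖
          ≤ M * ((C1 * (1 + M) ^ 2) * (1 + P ^ 2 / 2)⁻¹) := by
            apply mul_le_mul hV's h1 (norm_nonneg _) hMn
      _ = (M * (C1 * (1 + M) ^ 2)) * (1 + P ^ 2 / 2)⁻¹ := by ring
    · filter_upwards with P
      intro s _
      have hVs : HasDerivAt V (deriv V s) s := (hVd s).hasDerivAt
      have hu : HasDerivAt (fun s' : ℝ => P ^ 2 / 2 + V s') (deriv V s) s := hVs.const_add _
      have hg : HasDerivAt g (deriv g (P ^ 2 / 2 + V s)) (P ^ 2 / 2 + V s) :=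
        (g.differentiable.differentiableAt).hasDerivAt
      have h := (hg.scomp s hu).mul_const (Complex.exp (I * P * d))
      have heq : (deriv V s • deriv g (P ^ 2 / 2 + V s)) * Complex.exp (I * P * d)
          = deriv V s • (g1 (P ^ 2 / 2 + V s) * Complex.exp (I * P * d)) := by
        rw [hg1def, SchwartzMap.derivCLM_apply, smul_mul_assoc]
      rw [heq] at h
      exact h
  -- Step 2: outer derivative in d
  set c := V x with hcdef
  have step2 : HasDerivAt (fun d : ℝ => ∫ P : ℝ, g1 (P ^ 2 / 2 + c) * Complex.exp (I * P * d))
      (∫ P : ℝ, g1 (P ^ 2 / 2 + c) * (I * P * Complex.exp (I * P * D))) D := by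
    have hF'meas : AEStronglyMeasurable
        (fun P : ℝ => g1 (P ^ 2 / 2 + c) * (I * P * Complex.exp (I * P * D))) volume := by
      apply Continuous.aestronglyMeasurable
      apply Continuous.mul
      · exact g1.continuous.comp (by fun_prop)
      · exact Continuous.mul (by fun_prop) (Complex.continuous_exp.comp (by fun_prop))
    have h_bound : ∀ᵐ P : ℝ, ∀ d ∈ Metric.ball D 1,
        ‖g1 (P ^ 2 / 2 + c) * (I * P * Complex.exp (I * P * d))‖
          ≤ (C1 * (1 + |c|) ^ 2) * (1 + P ^ 2 / 2)⁻¹ := by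
      filter_upwards with P
      intro d _
      rw [norm_mul]
      have he : ‖I * (P : ℂ) * Complex.exp (I * P * d)‖ = |P| := by
        rw [norm_mul, norm_cexp_I_mul, norm_mul]
        simp
      rw [he, mul_comm]
      exact le_inv_form (by positivity) (comp_bound' hC1 c P)
    have h_diff : ∀ᵐ P : ℝ, ∀ d ∈ Metric.ball D 1,
        HasDerivAt (fun d : ℝ => g1 (P ^ 2 / 2 + c) * Complex.exp (I * P * d))
          (g1 (P ^ 2 / 2 + c) * (I * P * Complex.exp (I * P * d))) d := by
      filter_upwards with P
      intro d _
      exact (hasDerivAt_cexp_right P d).const_mul (g1 (P ^ 2 / 2 + c))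
    exact (hasDerivAt_integral_of_dominated_loc_of_deriv_le (Metric.ball_mem_nhds D one_pos)
      (Filter.Eventually.of_forall fun d => meas g1 c d)
      (hint g1 C1 hC1n hC1 c D) hF'meas h_bound (integrable_majorant _) h_diff).2
  -- combine: second mixed derivative
  have hfun2 : (fun d => deriv (fun s => Ψ s d) x)
      = fun d : ℝ => ((deriv V x : ℝ) : ℂ) * ∫ P : ℝ, g1 (P ^ 2 / 2 + c) * Complex.exp (I * P * d) :=
    funext fun d => (step1 d).deriv
  have hOut : deriv (fun d => deriv (fun s => Ψ s d) x) D
      = ((deriv V x : ℝ) : ℂ) * ∫ P : ℝ, g1 (P ^ 2 / 2 + c) * (I * P * Complex.exp (I * P * D)) := by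
    rw [hfun2]
    exact (step2.const_mul (((deriv V x : ℝ) : ℂ))).deriv
  -- Step 3: integration by parts
  have hd : ∀ P : ℝ, HasDerivAt (fun P : ℝ => g (P ^ 2 / 2 + c) * Complex.exp (I * P * D))
      ((P • g1 (P ^ 2 / 2 + c)) * Complex.exp (I * P * D)
        + g (P ^ 2 / 2 + c) * (I * D * Complex.exp (I * P * D))) P :=
    fun P => (hasDerivAt_schwartz_comp g c P).mul (hasDerivAt_cexp_left P D)
  have hint1 : Integrable (fun P : ℝ => (P • g1 (P ^ 2 / 2 + c)) * Complex.exp (I * P * D)) := by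
    refine (integrable_majorant (C1 * (1 + |c|) ^ 2)).mono ?_ ?_
    · apply Continuous.aestronglyMeasurable
      apply Continuous.mul
      · exact Continuous.smul continuous_id (g1.continuous.comp (by fun_prop))
      · exact Complex.continuous_exp.comp (by fun_prop)
    · filter_upwards with P
      rw [norm_mul, norm_cexp_I_mul, mul_one, norm_smul, Real.norm_eq_abs,
        Real.norm_eq_abs, _root_.abs_of_nonneg
          (mul_nonneg (mul_nonneg hC1n (by positivity)) (by positivity) :
            (0:ℝ) ≤ (C1 * (1 + |c|) ^ 2) * (1 + P ^ 2 / 2)⁻¹)]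
      exact le_inv_form (by positivity) (comp_bound' hC1 c P)
  have hint2 : Integrable
      (fun P : ℝ => g (P ^ 2 / 2 + c) * (I * D * Complex.exp (I * P * D))) := by
    refine (integrable_majorant (|D| * (C0 * (1 + |c|) ^ 2))).mono ?_ ?_
    · apply Continuous.aestronglyMeasurable
      apply Continuous.mul
      · exact g.continuous.comp (by fun_prop)
      · exact Continuous.mul continuous_const (Complex.continuous_exp.comp (by fun_prop))
    · filter_upwards with P
      rw [norm_mul, Real.norm_eq_abs, _root_.abs_of_nonneg (by positivity)]
      have he : ‖I * (D : ℂ) * Complex.exp (I * P * D)‖ = |D| := by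
        rw [norm_mul, norm_cexp_I_mul, norm_mul]
        simp
      rw [he]
      have := le_inv_form (by positivity : (0:ℝ) < 1 + P ^ 2 / 2) (comp_bound hC0 c P)
      calc ‖g (P ^ 2 / 2 + c)‖ * |D| ≤ ((C0 * (1 + |c|) ^ 2) * (1 + P ^ 2 / 2)⁻¹) * |D| := by
            apply mul_le_mul_of_nonneg_right this (abs_nonneg D)
      _ = (|D| * (C0 * (1 + |c|) ^ 2)) * (1 + P ^ 2 / 2)⁻¹ := by ring
  -- limits at infinity
  have hbnd : ∀ P : ℝ, ‖g (P ^ 2 / 2 + c) * Complex.exp (I * P * D)‖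
      ≤ (C0 * (1 + |c|) ^ 2) * (1 + P ^ 2 / 2)⁻¹ := by
    intro P
    rw [hnorm]
    exact le_inv_form (by positivity) (comp_bound hC0 c P)
  have hsq_top : Filter.Tendsto (fun P : ℝ => 1 + P ^ 2 / 2) Filter.atTop Filter.atTop := by
    apply Filter.tendsto_atTop_add_const_left
    exact (Filter.tendsto_pow_atTop (α := ℝ) (n := 2) two_ne_zero).atTop_div_const (by norm_num)
  have hsq_bot : Filter.Tendsto (fun P : ℝ => 1 + P ^ 2 / 2) Filter.atBot Filter.atTop := by
    apply Filter.tendsto_atTop_add_const_left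
    have h := (Filter.tendsto_pow_atTop (α := ℝ) (n := 2) two_ne_zero).comp (Filter.tendsto_abs_atBot_atTop (G := ℝ))
    have h2 : Filter.Tendsto (fun P : ℝ => P ^ 2) Filter.atBot Filter.atTop :=
      h.congr fun P => by simp [sq_abs]
    exact h2.atTop_div_const (by norm_num)
  have hmaj_top : Filter.Tendsto (fun P : ℝ => (C0 * (1 + |c|) ^ 2) * (1 + P ^ 2 / 2)⁻¹)
      Filter.atTop (nhds 0) := by
    have := (tendsto_inv_atTop_zero.comp hsq_top).const_mul (C0 * (1 + |c|) ^ 2)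
    simpa using this
  have hmaj_bot : Filter.Tendsto (fun P : ℝ => (C0 * (1 + |c|) ^ 2) * (1 + P ^ 2 / 2)⁻¹)
      Filter.atBot (nhds 0) := by
    have := (tendsto_inv_atTop_zero.comp hsq_bot).const_mul (C0 * (1 + |c|) ^ 2)
    simpa using this
  have htop : Filter.Tendsto (fun P : ℝ => g (P ^ 2 / 2 + c) * Complex.exp (I * P * D))
      Filter.atTop (nhds 0) := squeeze_zero_norm hbnd hmaj_top
  have hbot : Filter.Tendsto (fun P : ℝ => g (P ^ 2 / 2 + c) * Complex.exp (I * P * D))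
      Filter.atBot (nhds 0) := squeeze_zero_norm hbnd hmaj_bot
  have hIBP : (∫ P : ℝ, ((P • g1 (P ^ 2 / 2 + c)) * Complex.exp (I * P * D)
      + g (P ^ 2 / 2 + c) * (I * D * Complex.exp (I * P * D)))) = 0 := by
    rw [integral_of_hasDerivAt_of_tendsto hd (hint1.add hint2) hbot htop]
    simp
  rw [integral_add hint1 hint2] at hIBP
  have hsecond : (∫ P : ℝ, g (P ^ 2 / 2 + c) * (I * D * Complex.exp (I * P * D)))
      = I * D * Ψ x D := by
    have : (fun P : ℝ => g (P ^ 2 / 2 + c) * (I * D * Complex.exp (I * P * D)))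
        = fun P : ℝ => (I * D) * (g (P ^ 2 / 2 + c) * Complex.exp (I * P * D)) :=
      funext fun P => by ring
    rw [this, integral_const_mul, ← hΨ x D]
  have hfirst : (∫ P : ℝ, (P • g1 (P ^ 2 / 2 + c)) * Complex.exp (I * P * D))
      = -(I * D * Ψ x D) := by
    rw [hsecond] at hIBP
    linear_combination hIBP
  have hJ : (∫ P : ℝ, g1 (P ^ 2 / 2 + c) * (I * P * Complex.exp (I * P * D)))
      = I * -(I * D * Ψ x D) := by
    have heq : (fun P : ℝ => g1 (P ^ 2 / 2 + c) * (I * P * Complex.exp (I * P * D)))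
        = fun P : ℝ => I * ((P • g1 (P ^ 2 / 2 + c)) * Complex.exp (I * P * D)) :=
      funext fun P => by rw [Complex.real_smul]; ring
    rw [heq, integral_const_mul, hfirst]
  rw [hOut, hJ]
  linear_combination (((deriv V x : ℝ) : ℂ) * (D : ℂ) * Ψ x D) * Complex.I_sq
end
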